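/- Fix Φ = B_n, C_n or D_n realized in ℝⁿ and λ = (λ_1,…,λ_n) ∈ ℂⁿ. Then the integral root subsystem Φ_{[λ]} = {α ∈ Φ : ⟨λ, α∨⟩ ∈ ℤ} is the union over z ∈ ℂ of the sets Φ_{(z)}; moreover, for z, z' ∈ ℂ: if z + z' ∈ ℤ or z − z' ∈ ℤ then Φ_{(z)} = Φ_{(z')}, and if z + z' ∉ ℤ and z − z' ∉ ℤ then Φ_{(z)} and Φ_{(z')} are orthogonal (in particular disjoint when nonempty). Consequently Φ_{[λ]} is the disjoint union of the pairwise orthogonal sets Φ_{(z)} over representatives z with 0 ≤ Re(z) ≤ 1/2. -/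
import Mathlib


/-- The three classical types `B`, `C`, `D`. -/
inductive BCDType
  | B | C | D

/-- The standard basis vector `ε_i` of `ℝⁿ` (coordinates indexed `1,…,n`). -/
def eps (i : ℕ) : ℕ → ℝ := fun m => if m = i then 1 else 0

/-- The root system of type `B_n`, `C_n` or `D_n` in `ℝⁿ` (coordinates `1,…,n`). -/
def rootSys (t : BCDType) (n : ℕ) : Set (ℕ → ℝ) :=
  {α | ∃ i j, 1 ≤ i ∧ i < j ∧ j ≤ n ∧
      (α = eps i - eps j ∨ α = eps j - eps i ∨ α = eps i + eps j ∨ α = -(eps i + eps j))} ∪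
    (match t with
      | .B => {α | ∃ i, 1 ≤ i ∧ i ≤ n ∧ (α = eps i ∨ α = -eps i)}
      | .C => {α | ∃ i, 1 ≤ i ∧ i ≤ n ∧ (α = (2 : ℝ) • eps i ∨ α = -((2 : ℝ) • eps i))}
      | .D => ∅)

/-- `K_{(z)} = {i ≤ n : λ_i ∈ z + ℤ}`. -/
def Kz (n : ℕ) (lam : ℕ → ℂ) (z : ℂ) : Set ℕ :=
  {i | 1 ≤ i ∧ i ≤ n ∧ ∃ k : ℤ, lam i = z + (k : ℂ)}

/-- The roots `±(ε_i ± ε_j)` with `i < j` both in `K_{(z)}`. -/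
def pmPairs (n : ℕ) (lam : ℕ → ℂ) (z : ℂ) : Set (ℕ → ℝ) :=
  {α | ∃ i ∈ Kz n lam z, ∃ j ∈ Kz n lam z, i < j ∧
    (α = eps i - eps j ∨ α = -(eps i - eps j) ∨ α = eps i + eps j ∨ α = -(eps i + eps j))}

/-- The type-`A` subsystem attached to `z ∉ (1/2)ℤ`:
`{ε_i − ε_j, ±(ε_j + ε_k), ε_k − ε_l : i, j ∈ K_{(z)}, k, l ∈ K_{(−z)}, i ≠ j, k ≠ l}`. -/
def typeASet (n : ℕ) (lam : ℕ → ℂ) (z : ℂ) : Set (ℕ → ℝ) :=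
  {α | (∃ i ∈ Kz n lam z, ∃ j ∈ Kz n lam z, i ≠ j ∧ α = eps i - eps j) ∨
    (∃ j ∈ Kz n lam z, ∃ k ∈ Kz n lam (-z), (α = eps j + eps k ∨ α = -(eps j + eps k))) ∨
    (∃ k ∈ Kz n lam (-z), ∃ l ∈ Kz n lam (-z), k ≠ l ∧ α = eps k - eps l)}

open Classical in
/-- The subsystem `Φ_{(z)}` of `Φ = B_n/C_n/D_n` attached to `z ∈ ℂ`. -/
noncomputable def PhiZ (t : BCDType) (n : ℕ) (lam : ℕ → ℂ) (z : ℂ) : Set (ℕ → ℝ) :=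
  if ∃ k : ℤ, 2 * z = (k : ℂ) then
    match t with
    | .B => pmPairs n lam z ∪ {α | ∃ i ∈ Kz n lam z, (α = eps i ∨ α = -eps i)}
    | .C =>
        if ∃ k : ℤ, z = (k : ℂ) then
          pmPairs n lam z ∪
            {α | ∃ i ∈ Kz n lam z, (α = (2 : ℝ) • eps i ∨ α = -((2 : ℝ) • eps i))}
        else pmPairs n lam z
    | .D => pmPairs n lam z
  else typeASet n lam z

/-- `⟨λ, α∨⟩ = 2(λ,α)/(α,α)` for `λ ∈ ℂⁿ` and a root `α ∈ ℝⁿ`. -/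
noncomputable def pairC (n : ℕ) (lam : ℕ → ℂ) (α : ℕ → ℝ) : ℂ :=
  2 * (∑ m ∈ Finset.Icc 1 n, lam m * (α m : ℂ)) /
    (∑ m ∈ Finset.Icc 1 n, ((α m : ℂ) * (α m : ℂ)))

lemma sum_mul_eps (F : ℕ → ℂ) {i n : ℕ} (hi : i ∈ Finset.Icc 1 n) :
    ∑ m ∈ Finset.Icc 1 n, F m * ((eps i m : ℝ) : ℂ) = F i := by
  have h : ∀ m ∈ Finset.Icc 1 n, F m * ((eps i m : ℝ) : ℂ) = if m = i then F m else 0 := by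
    intro m _
    by_cases h1 : m = i <;> simp [eps, h1]
  rw [Finset.sum_congr rfl h, Finset.sum_ite_eq' (Finset.Icc 1 n) i F, if_pos hi]

lemma pairC_neg (n : ℕ) (lam : ℕ → ℂ) (α : ℕ → ℝ) :
    pairC n lam (-α) = - pairC n lam α := by
  simp only [pairC, Pi.neg_apply]
  push_cast
  simp only [mul_neg, neg_mul, neg_neg, Finset.sum_neg_distrib]
  ring

lemma pairC_sub {n i j : ℕ} (lam : ℕ → ℂ) (hi : i ∈ Finset.Icc 1 n) (hj : j ∈ Finset.Icc 1 n)
    (hij : i ≠ j) : pairC n lam (eps i - eps j) = lam i - lam j := by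
  have hnum : ∑ m ∈ Finset.Icc 1 n, lam m * (((eps i - eps j) m : ℝ) : ℂ) = lam i - lam j := by
    simp only [Pi.sub_apply]
    push_cast
    simp only [mul_sub, Finset.sum_sub_distrib]
    rw [sum_mul_eps lam hi, sum_mul_eps lam hj]
  have hden : ∑ m ∈ Finset.Icc 1 n, (((eps i - eps j) m : ℝ):ℂ) * (((eps i - eps j) m :ℝ):ℂ) = 2 := by
    have h : ∀ m ∈ Finset.Icc 1 n, (((eps i - eps j) m : ℝ):ℂ) * (((eps i - eps j) m :ℝ):ℂ)
        = (if m = i then 1 else 0) + (if m = j then 1 else 0) := by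
      intro m _
      by_cases h1 : m = i <;> by_cases h2 : m = j <;>
        simp_all [eps, Pi.sub_apply]
    rw [Finset.sum_congr rfl h, Finset.sum_add_distrib,
      Finset.sum_ite_eq' (Finset.Icc 1 n) i (fun _ => (1:ℂ)),
      Finset.sum_ite_eq' (Finset.Icc 1 n) j (fun _ => (1:ℂ)), if_pos hi, if_pos hj]
    norm_num
  rw [pairC, hnum, hden]
  ring

lemma pairC_add {n i j : ℕ} (lam : ℕ → ℂ) (hi : i ∈ Finset.Icc 1 n) (hj : j ∈ Finset.Icc 1 n)
    (hij : i ≠ j) : pairC n lam (eps i + eps j) = lam i + lam j := by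
  have hnum : ∑ m ∈ Finset.Icc 1 n, lam m * (((eps i + eps j) m : ℝ) : ℂ) = lam i + lam j := by
    simp only [Pi.add_apply]
    push_cast
    simp only [mul_add, Finset.sum_add_distrib]
    rw [sum_mul_eps lam hi, sum_mul_eps lam hj]
  have hden : ∑ m ∈ Finset.Icc 1 n, (((eps i + eps j) m : ℝ):ℂ) * (((eps i + eps j) m :ℝ):ℂ) = 2 := by
    have h : ∀ m ∈ Finset.Icc 1 n, (((eps i + eps j) m : ℝ):ℂ) * (((eps i + eps j) m :ℝ):ℂ)
        = (if m = i then 1 else 0) + (if m = j then 1 else 0) := by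
      intro m _
      by_cases h1 : m = i <;> by_cases h2 : m = j <;>
        simp_all [eps, Pi.add_apply]
    rw [Finset.sum_congr rfl h, Finset.sum_add_distrib,
      Finset.sum_ite_eq' (Finset.Icc 1 n) i (fun _ => (1:ℂ)),
      Finset.sum_ite_eq' (Finset.Icc 1 n) j (fun _ => (1:ℂ)), if_pos hi, if_pos hj]
    norm_num
  rw [pairC, hnum, hden]
  ring

lemma pairC_single {n i : ℕ} (lam : ℕ → ℂ) (hi : i ∈ Finset.Icc 1 n) :
    pairC n lam (eps i) = 2 * lam i := by
  have hnum := sum_mul_eps lam hi (n := n)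
  have hden : ∑ m ∈ Finset.Icc 1 n, ((eps i m : ℝ):ℂ) * ((eps i m :ℝ):ℂ) = 1 := by
    have h : ∀ m ∈ Finset.Icc 1 n, ((eps i m : ℝ):ℂ) * ((eps i m :ℝ):ℂ)
        = if m = i then (1:ℂ) else 0 := by
      intro m _
      by_cases h1 : m = i <;> simp [eps, h1]
    rw [Finset.sum_congr rfl h, Finset.sum_ite_eq' (Finset.Icc 1 n) i (fun _ => (1:ℂ)), if_pos hi]
  rw [pairC, hnum, hden]
  ring

lemma pairC_double {n i : ℕ} (lam : ℕ → ℂ) (hi : i ∈ Finset.Icc 1 n) :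
    pairC n lam ((2:ℝ) • eps i) = lam i := by
  have hnum : ∑ m ∈ Finset.Icc 1 n, lam m * ((((2:ℝ) • eps i) m : ℝ) : ℂ) = 2 * lam i := by
    have h : ∀ m ∈ Finset.Icc 1 n, lam m * ((((2:ℝ) • eps i) m : ℝ) : ℂ)
        = if m = i then 2 * lam m else 0 := by
      intro m _
      by_cases h1 : m = i <;> simp [eps, h1, Pi.smul_apply] <;> ring
    rw [Finset.sum_congr rfl h, Finset.sum_ite_eq' (Finset.Icc 1 n) i (fun m => 2 * lam m), if_pos hi]
  have hden : ∑ m ∈ Finset.Icc 1 n, ((((2:ℝ) • eps i) m : ℝ):ℂ) * ((((2:ℝ) • eps i) m :ℝ):ℂ) = 4 := by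
    have h : ∀ m ∈ Finset.Icc 1 n, ((((2:ℝ) • eps i) m : ℝ):ℂ) * ((((2:ℝ) • eps i) m :ℝ):ℂ)
        = if m = i then (4:ℂ) else 0 := by
      intro m _
      by_cases h1 : m = i <;> simp [eps, h1, Pi.smul_apply] <;> norm_num
    rw [Finset.sum_congr rfl h, Finset.sum_ite_eq' (Finset.Icc 1 n) i (fun _ => (4:ℂ)), if_pos hi]
  rw [pairC, hnum, hden]
  ring

lemma neg_eps_sub (i j : ℕ) : -(eps i - eps j) = eps j - eps i := by
  funext m; by_cases h1 : m = i <;> by_cases h2 : m = j <;> simp [eps, h1, h2]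

lemma eps_add_comm (i j : ℕ) : eps i + eps j = eps j + eps i := add_comm _ _

lemma mem_rootSys_sub (t : BCDType) {n i j : ℕ} (hi : 1 ≤ i) (hin : i ≤ n) (hj : 1 ≤ j)
    (hjn : j ≤ n) (hij : i ≠ j) : eps i - eps j ∈ rootSys t n := by
  rcases lt_or_gt_of_ne hij with h | h
  · exact Or.inl ⟨i, j, hi, h, hjn, Or.inl rfl⟩
  · exact Or.inl ⟨j, i, hj, h, hin, Or.inr (Or.inl rfl)⟩

lemma mem_rootSys_add (t : BCDType) {n i j : ℕ} (hi : 1 ≤ i) (hin : i ≤ n) (hj : 1 ≤ j)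
    (hjn : j ≤ n) (hij : i ≠ j) : eps i + eps j ∈ rootSys t n := by
  rcases lt_or_gt_of_ne hij with h | h
  · exact Or.inl ⟨i, j, hi, h, hjn, Or.inr (Or.inr (Or.inl rfl))⟩
  · exact Or.inl ⟨j, i, hj, h, hin, Or.inr (Or.inr (Or.inl (eps_add_comm i j)))⟩

lemma mem_rootSys_nadd (t : BCDType) {n i j : ℕ} (hi : 1 ≤ i) (hin : i ≤ n) (hj : 1 ≤ j)
    (hjn : j ≤ n) (hij : i ≠ j) : -(eps i + eps j) ∈ rootSys t n := by
  rcases lt_or_gt_of_ne hij with h | h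
  · exact Or.inl ⟨i, j, hi, h, hjn, Or.inr (Or.inr (Or.inr rfl))⟩
  · exact Or.inl ⟨j, i, hj, h, hin, Or.inr (Or.inr (Or.inr (by rw [eps_add_comm])))⟩

lemma Kz_congr {n : ℕ} {lam : ℕ → ℂ} {z z' : ℂ} (h : ∃ m : ℤ, z - z' = (m : ℂ)) :
    Kz n lam z = Kz n lam z' := by
  obtain ⟨m, hm⟩ := h
  ext i
  simp only [Kz, Set.mem_setOf_eq]
  constructor <;> rintro ⟨h1, h2, k, hk⟩
  · exact ⟨h1, h2, k + m, by push_cast; rw [hk]; linear_combination hm⟩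
  · exact ⟨h1, h2, k - m, by push_cast; rw [hk]; linear_combination -hm⟩

lemma int_shift2 {z z' : ℂ} (h : ∃ m : ℤ, z - z' = (m : ℂ)) :
    (∃ k : ℤ, 2 * z = (k : ℂ)) ↔ (∃ k : ℤ, 2 * z' = (k : ℂ)) := by
  obtain ⟨m, hm⟩ := h
  constructor <;> rintro ⟨k, hk⟩
  · exact ⟨k - 2 * m, by push_cast; linear_combination hk - 2 * hm⟩
  · exact ⟨k + 2 * m, by push_cast; linear_combination hk + 2 * hm⟩

lemma int_shift1 {z z' : ℂ} (h : ∃ m : ℤ, z - z' = (m : ℂ)) :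
    (∃ k : ℤ, z = (k : ℂ)) ↔ (∃ k : ℤ, z' = (k : ℂ)) := by
  obtain ⟨m, hm⟩ := h
  constructor <;> rintro ⟨k, hk⟩
  · exact ⟨k - m, by push_cast; linear_combination hk - hm⟩
  · exact ⟨k + m, by push_cast; linear_combination hk + hm⟩

lemma pmPairs_congr {n : ℕ} {lam : ℕ → ℂ} {z z' : ℂ} (h : Kz n lam z = Kz n lam z') :
    pmPairs n lam z = pmPairs n lam z' := by
  unfold pmPairs; rw [h]

lemma typeASet_congr {n : ℕ} {lam : ℕ → ℂ} {z z' : ℂ} (h : Kz n lam z = Kz n lam z')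
    (h' : Kz n lam (-z) = Kz n lam (-z')) : typeASet n lam z = typeASet n lam z' := by
  unfold typeASet; rw [h, h']

lemma typeASet_neg {n : ℕ} {lam : ℕ → ℂ} {z : ℂ} :
    typeASet n lam (-z) = typeASet n lam z := by
  unfold typeASet
  rw [neg_neg]
  ext α
  simp only [Set.mem_setOf_eq]
  constructor <;> rintro (⟨i, hi, j, hj, hij, hα⟩ | ⟨j, hj, k, hk, hα⟩ | ⟨k, hk, l, hl, hkl, hα⟩)
  · exact Or.inr (Or.inr ⟨i, hi, j, hj, hij, hα⟩)
  · refine Or.inr (Or.inl ⟨k, hk, j, hj, ?_⟩)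
    rw [eps_add_comm k j]; exact hα
  · exact Or.inl ⟨k, hk, l, hl, hkl, hα⟩
  · exact Or.inr (Or.inr ⟨i, hi, j, hj, hij, hα⟩)
  · refine Or.inr (Or.inl ⟨k, hk, j, hj, ?_⟩)
    rw [eps_add_comm k j]; exact hα
  · exact Or.inl ⟨k, hk, l, hl, hkl, hα⟩

lemma PhiZ_shift (t : BCDType) {n : ℕ} {lam : ℕ → ℂ} {z z' : ℂ}
    (h : ∃ m : ℤ, z - z' = (m : ℂ)) : PhiZ t n lam z = PhiZ t n lam z' := by
  have hK : Kz n lam z = Kz n lam z' := Kz_congr h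
  have hKn : Kz n lam (-z) = Kz n lam (-z') := by
    apply Kz_congr; obtain ⟨m, hm⟩ := h; exact ⟨-m, by push_cast; linear_combination -hm⟩
  have h2 := int_shift2 h
  have h1 := int_shift1 h
  by_cases hc : ∃ k : ℤ, 2 * z = (k : ℂ)
  · have hc' : ∃ k : ℤ, 2 * z' = (k : ℂ) := h2.mp hc
    cases t
    · simp only [PhiZ, if_pos hc, if_pos hc', pmPairs_congr hK, hK]
    · by_cases hd : ∃ k : ℤ, z = (k : ℂ)
      · have hd' : ∃ k : ℤ, z' = (k : ℂ) := h1.mp hd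
        simp only [PhiZ, if_pos hc, if_pos hc', if_pos hd, if_pos hd', pmPairs_congr hK, hK]
      · have hd' : ¬∃ k : ℤ, z' = (k : ℂ) := fun hx => hd (h1.mpr hx)
        simp only [PhiZ, if_pos hc, if_pos hc', if_neg hd, if_neg hd', pmPairs_congr hK]
    · simp only [PhiZ, if_pos hc, if_pos hc', pmPairs_congr hK]
  · have hc' : ¬∃ k : ℤ, 2 * z' = (k : ℂ) := fun hx => hc (h2.mpr hx)
    simp only [PhiZ, if_neg hc, if_neg hc', typeASet_congr hK hKn]

lemma PhiZ_neg (t : BCDType) {n : ℕ} {lam : ℕ → ℂ} {z : ℂ} :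
    PhiZ t n lam (-z) = PhiZ t n lam z := by
  by_cases hc : ∃ k : ℤ, 2 * z = (k : ℂ)
  · have hc' : ∃ k : ℤ, 2 * (-z) = (k : ℂ) := by
      obtain ⟨k, hk⟩ := hc; exact ⟨-k, by push_cast; linear_combination -hk⟩
    have hK : Kz n lam (-z) = Kz n lam z := by
      apply Kz_congr; obtain ⟨k, hk⟩ := hc; exact ⟨-k, by push_cast; linear_combination -hk⟩
    have h1 : (∃ k : ℤ, -z = (k : ℂ)) ↔ (∃ k : ℤ, z = (k : ℂ)) := by
      constructor <;> rintro ⟨k, hk⟩ <;> exact ⟨-k, by push_cast; linear_combination -hk⟩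
    cases t
    · simp only [PhiZ, if_pos hc, if_pos hc', pmPairs_congr hK, hK]
    · by_cases hd : ∃ k : ℤ, z = (k : ℂ)
      · simp only [PhiZ, if_pos hc, if_pos hc', if_pos hd, if_pos (h1.mpr hd),
          pmPairs_congr hK, hK]
      · simp only [PhiZ, if_pos hc, if_pos hc', if_neg hd, if_neg (fun hx => hd (h1.mp hx)),
          pmPairs_congr hK]
    · simp only [PhiZ, if_pos hc, if_pos hc', pmPairs_congr hK]
  · have hc' : ¬∃ k : ℤ, 2 * (-z) = (k : ℂ) := by
      rintro ⟨k, hk⟩; exact hc ⟨-k, by push_cast; linear_combination -hk⟩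
    simp only [PhiZ, if_neg hc, if_neg hc', typeASet_neg]

lemma PhiZ_congr (t : BCDType) {n : ℕ} {lam : ℕ → ℂ} (z z' : ℂ)
    (h : (∃ k : ℤ, z + z' = (k : ℂ)) ∨ (∃ k : ℤ, z - z' = (k : ℂ))) :
    PhiZ t n lam z = PhiZ t n lam z' := by
  rcases h with ⟨k, hk⟩ | h
  · rw [← PhiZ_neg t (z := z')]
    exact PhiZ_shift t ⟨k, by push_cast; linear_combination hk⟩
  · exact PhiZ_shift t h

lemma eps_self (i : ℕ) : eps i i = 1 := if_pos rfl

lemma eps_ne {i m : ℕ} (h : m ≠ i) : eps i m = 0 := if_neg h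

lemma PhiZ_forms {t : BCDType} {n : ℕ} {lam : ℕ → ℂ} {z : ℂ} {α : ℕ → ℝ}
    (hα : α ∈ PhiZ t n lam z) :
    ∃ i j, i ∈ (Kz n lam z ∪ Kz n lam (-z)) ∧ j ∈ (Kz n lam z ∪ Kz n lam (-z)) ∧
      ((i ≠ j ∧ (α = eps i - eps j ∨ α = -(eps i - eps j) ∨ α = eps i + eps j ∨
          α = -(eps i + eps j))) ∨
        (α = eps i ∨ α = -eps i ∨ α = (2:ℝ) • eps i ∨ α = -((2:ℝ) • eps i))) := by
  by_cases hc : ∃ k : ℤ, 2 * z = (k : ℂ)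
  · have hpm : α ∈ pmPairs n lam z →
        ∃ i j, i ∈ (Kz n lam z ∪ Kz n lam (-z)) ∧ j ∈ (Kz n lam z ∪ Kz n lam (-z)) ∧
          ((i ≠ j ∧ (α = eps i - eps j ∨ α = -(eps i - eps j) ∨ α = eps i + eps j ∨
              α = -(eps i + eps j))) ∨
            (α = eps i ∨ α = -eps i ∨ α = (2:ℝ) • eps i ∨ α = -((2:ℝ) • eps i))) := by
      rintro ⟨i, hi, j, hj, hij, hforms⟩
      exact ⟨i, j, Or.inl hi, Or.inl hj, Or.inl ⟨Nat.ne_of_lt hij, hforms⟩⟩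
    cases t
    · simp only [PhiZ, if_pos hc] at hα
      rcases hα with h | ⟨i, hi, hforms⟩
      · exact hpm h
      · exact ⟨i, i, Or.inl hi, Or.inl hi,
          Or.inr (by rcases hforms with h | h <;> [exact Or.inl h; exact Or.inr (Or.inl h)])⟩
    · simp only [PhiZ, if_pos hc] at hα
      by_cases hd : ∃ k : ℤ, z = (k : ℂ)
      · rw [if_pos hd] at hα
        rcases hα with h | ⟨i, hi, hforms⟩
        · exact hpm h
        · exact ⟨i, i, Or.inl hi, Or.inl hi, Or.inr (by
            rcases hforms with h | h
            · exact Or.inr (Or.inr (Or.inl h))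
            · exact Or.inr (Or.inr (Or.inr h)))⟩
      · rw [if_neg hd] at hα
        exact hpm hα
    · simp only [PhiZ, if_pos hc] at hα
      exact hpm hα
  · simp only [PhiZ, if_neg hc] at hα
    rcases hα with ⟨i, hi, j, hj, hij, hform⟩ | ⟨j, hj, k, hk, hforms⟩ | ⟨k, hk, l, hl, hkl, hform⟩
    · exact ⟨i, j, Or.inl hi, Or.inl hj, Or.inl ⟨hij, Or.inl hform⟩⟩
    · have hjk : j ≠ k := by
        rintro rfl
        obtain ⟨-, -, a, ha⟩ := hj
        obtain ⟨-, -, b, hb⟩ := hk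
        exact hc ⟨b - a, by push_cast; rw [ha] at hb; linear_combination hb⟩
      exact ⟨j, k, Or.inl hj, Or.inr hk, Or.inl ⟨hjk, by
        rcases hforms with h | h
        · exact Or.inr (Or.inr (Or.inl h))
        · exact Or.inr (Or.inr (Or.inr h))⟩⟩
    · exact ⟨k, l, Or.inr hk, Or.inr hl, Or.inl ⟨hkl, Or.inl hform⟩⟩

lemma PhiZ_support {t : BCDType} {n : ℕ} {lam : ℕ → ℂ} {z : ℂ} {α : ℕ → ℝ}
    (hα : α ∈ PhiZ t n lam z) {m : ℕ} (hm : α m ≠ 0) :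
    m ∈ Kz n lam z ∪ Kz n lam (-z) := by
  obtain ⟨i, j, hi, hj, hforms⟩ := PhiZ_forms hα
  have : m = i ∨ m = j := by
    by_contra hcon
    push_neg at hcon
    obtain ⟨h1, h2⟩ := hcon
    apply hm
    rcases hforms with ⟨-, h | h | h | h⟩ | (h | h | h | h) <;> subst h <;>
      simp [eps_ne h1, eps_ne h2]
  rcases this with rfl | rfl
  · exact hi
  · exact hj

lemma PhiZ_nonzero {t : BCDType} {n : ℕ} {lam : ℕ → ℂ} {z : ℂ} {α : ℕ → ℝ}
    (hα : α ∈ PhiZ t n lam z) : ∃ i ∈ Finset.Icc 1 n, α i ≠ 0 := by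
  obtain ⟨i, j, hi, hj, hforms⟩ := PhiZ_forms hα
  have hmem : i ∈ Finset.Icc 1 n := by
    rcases hi with ⟨h1, h2, -⟩ | ⟨h1, h2, -⟩ <;> exact Finset.mem_Icc.mpr ⟨h1, h2⟩
  refine ⟨i, hmem, ?_⟩
  rcases hforms with ⟨hij, hf⟩ | hf
  · rcases hf with h | h | h | h <;> subst h <;> simp [eps_self, eps_ne hij]
  · rcases hf with h | h | h | h <;> subst h <;> simp [eps_self]

lemma PhiZ_orth (t : BCDType) {n : ℕ} {lam : ℕ → ℂ} {z z' : ℂ}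
    (hp : ¬∃ k : ℤ, z + z' = (k : ℂ)) (hm : ¬∃ k : ℤ, z - z' = (k : ℂ))
    {α β : ℕ → ℝ} (hα : α ∈ PhiZ t n lam z) (hβ : β ∈ PhiZ t n lam z') :
    (∑ m ∈ Finset.Icc 1 n, α m * β m) = 0 := by
  apply Finset.sum_eq_zero
  intro m _
  by_contra hne
  have hα0 : α m ≠ 0 := fun h => hne (by rw [h, zero_mul])
  have hβ0 : β m ≠ 0 := fun h => hne (by rw [h, mul_zero])
  have h1 := PhiZ_support hα hα0
  have h2 := PhiZ_support hβ hβ0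
  rcases h1 with ⟨-, -, a, ha⟩ | ⟨-, -, a, ha⟩ <;> rcases h2 with ⟨-, -, b, hb⟩ | ⟨-, -, b, hb⟩
  · exact hm ⟨b - a, by push_cast; rw [ha] at hb; linear_combination hb⟩
  · exact hp ⟨b - a, by push_cast; rw [ha] at hb; linear_combination hb⟩
  · exact hp ⟨a - b, by push_cast; rw [ha] at hb; linear_combination -hb⟩
  · exact hm ⟨a - b, by push_cast; rw [ha] at hb; linear_combination -hb⟩

lemma pmPairs_subset_PhiZ (t : BCDType) {n : ℕ} {lam : ℕ → ℂ} {z : ℂ}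
    (h2 : ∃ k : ℤ, 2 * z = (k : ℂ)) : pmPairs n lam z ⊆ PhiZ t n lam z := by
  cases t
  · simp only [PhiZ, if_pos h2]; exact Set.subset_union_left
  · simp only [PhiZ, if_pos h2]
    split_ifs
    · exact Set.subset_union_left
    · exact subset_rfl
  · simp only [PhiZ, if_pos h2]
    exact subset_rfl

lemma PhiZ_subset_integral (t : BCDType) {n : ℕ} {lam : ℕ → ℂ} (z : ℂ) :
    PhiZ t n lam z ⊆ {α ∈ rootSys t n | ∃ k : ℤ, pairC n lam α = (k : ℂ)} := by
  intro α hα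
  by_cases hc : ∃ k : ℤ, 2 * z = (k : ℂ)
  · obtain ⟨c, hc2⟩ := hc
    have hpm : α ∈ pmPairs n lam z →
        α ∈ {α ∈ rootSys t n | ∃ k : ℤ, pairC n lam α = (k : ℂ)} := by
      rintro ⟨i, ⟨hi1, hi2, a, ha⟩, j, ⟨hj1, hj2, b, hb⟩, hij, hf⟩
      have hiI : i ∈ Finset.Icc 1 n := Finset.mem_Icc.mpr ⟨hi1, hi2⟩
      have hjI : j ∈ Finset.Icc 1 n := Finset.mem_Icc.mpr ⟨hj1, hj2⟩
      have hne : i ≠ j := Nat.ne_of_lt hij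
      rcases hf with rfl | rfl | rfl | rfl
      · exact ⟨mem_rootSys_sub t hi1 hi2 hj1 hj2 hne,
          a - b, by rw [pairC_sub lam hiI hjI hne, ha, hb]; push_cast; ring⟩
      · refine ⟨by rw [neg_eps_sub]; exact mem_rootSys_sub t hj1 hj2 hi1 hi2 hne.symm,
          b - a, ?_⟩
        rw [pairC_neg, pairC_sub lam hiI hjI hne, ha, hb]; push_cast; ring
      · exact ⟨mem_rootSys_add t hi1 hi2 hj1 hj2 hne,
          c + a + b, by rw [pairC_add lam hiI hjI hne, ha, hb]; push_cast
                        linear_combination hc2⟩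
      · exact ⟨mem_rootSys_nadd t hi1 hi2 hj1 hj2 hne,
          -c - a - b, by rw [pairC_neg, pairC_add lam hiI hjI hne, ha, hb]; push_cast
                         linear_combination -hc2⟩
    have hcc : ∃ k : ℤ, 2 * z = (k : ℂ) := ⟨c, hc2⟩
    cases t
    · simp only [PhiZ, if_pos hcc] at hα
      rcases hα with h | ⟨i, ⟨hi1, hi2, a, ha⟩, hf⟩
      · exact hpm h
      · have hiI : i ∈ Finset.Icc 1 n := Finset.mem_Icc.mpr ⟨hi1, hi2⟩
        rcases hf with rfl | rfl
        · exact ⟨Or.inr ⟨i, hi1, hi2, Or.inl rfl⟩,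
            c + 2 * a, by rw [pairC_single lam hiI, ha]; push_cast; linear_combination hc2⟩
        · exact ⟨Or.inr ⟨i, hi1, hi2, Or.inr rfl⟩,
            -c - 2 * a, by rw [pairC_neg, pairC_single lam hiI, ha]; push_cast
                           linear_combination -hc2⟩
    · simp only [PhiZ, if_pos hcc] at hα
      by_cases hd : ∃ k : ℤ, z = (k : ℂ)
      · rw [if_pos hd] at hα
        obtain ⟨d, hd2⟩ := hd
        rcases hα with h | ⟨i, ⟨hi1, hi2, a, ha⟩, hf⟩
        · exact hpm h
        · have hiI : i ∈ Finset.Icc 1 n := Finset.mem_Icc.mpr ⟨hi1, hi2⟩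
          rcases hf with rfl | rfl
          · exact ⟨Or.inr ⟨i, hi1, hi2, Or.inl rfl⟩,
              d + a, by rw [pairC_double lam hiI, ha, hd2]; push_cast; ring⟩
          · exact ⟨Or.inr ⟨i, hi1, hi2, Or.inr rfl⟩,
              -d - a, by rw [pairC_neg, pairC_double lam hiI, ha, hd2]; push_cast; ring⟩
      · rw [if_neg hd] at hα
        exact hpm hα
    · simp only [PhiZ, if_pos hcc] at hα
      exact hpm hα
  · simp only [PhiZ, if_neg hc] at hα
    rcases hα with ⟨i, ⟨hi1, hi2, a, ha⟩, j, ⟨hj1, hj2, b, hb⟩, hij, rfl⟩ |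
      ⟨i, ⟨hi1, hi2, a, ha⟩, j, ⟨hj1, hj2, b, hb⟩, hf⟩ |
      ⟨i, ⟨hi1, hi2, a, ha⟩, j, ⟨hj1, hj2, b, hb⟩, hij, rfl⟩
    · have hiI : i ∈ Finset.Icc 1 n := Finset.mem_Icc.mpr ⟨hi1, hi2⟩
      have hjI : j ∈ Finset.Icc 1 n := Finset.mem_Icc.mpr ⟨hj1, hj2⟩
      exact ⟨mem_rootSys_sub t hi1 hi2 hj1 hj2 hij,
        a - b, by rw [pairC_sub lam hiI hjI hij, ha, hb]; push_cast; ring⟩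
    · have hiI : i ∈ Finset.Icc 1 n := Finset.mem_Icc.mpr ⟨hi1, hi2⟩
      have hjI : j ∈ Finset.Icc 1 n := Finset.mem_Icc.mpr ⟨hj1, hj2⟩
      have hne : i ≠ j := by
        rintro rfl
        exact hc ⟨b - a, by push_cast; rw [ha] at hb; linear_combination hb⟩
      rcases hf with rfl | rfl
      · exact ⟨mem_rootSys_add t hi1 hi2 hj1 hj2 hne,
          a + b, by rw [pairC_add lam hiI hjI hne, ha, hb]; push_cast; ring⟩
      · exact ⟨mem_rootSys_nadd t hi1 hi2 hj1 hj2 hne,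
          -a - b, by rw [pairC_neg, pairC_add lam hiI hjI hne, ha, hb]; push_cast; ring⟩
    · have hiI : i ∈ Finset.Icc 1 n := Finset.mem_Icc.mpr ⟨hi1, hi2⟩
      have hjI : j ∈ Finset.Icc 1 n := Finset.mem_Icc.mpr ⟨hj1, hj2⟩
      exact ⟨mem_rootSys_sub t hi1 hi2 hj1 hj2 hij,
        a - b, by rw [pairC_sub lam hiI hjI hij, ha, hb]; push_cast; ring⟩

lemma Kz_self {n : ℕ} (lam : ℕ → ℂ) {i : ℕ} (h1 : 1 ≤ i) (h2 : i ≤ n) :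
    i ∈ Kz n lam (lam i) := ⟨h1, h2, 0, by simp⟩

lemma integral_mem_PhiZ (t : BCDType) {n : ℕ} {lam : ℕ → ℂ} {α : ℕ → ℝ}
    (hα : α ∈ rootSys t n) (hk : ∃ k : ℤ, pairC n lam α = (k : ℂ)) :
    ∃ z : ℂ, α ∈ PhiZ t n lam z := by
  obtain ⟨k, hk⟩ := hk
  have hpair : ∀ i j : ℕ, 1 ≤ i → i < j → j ≤ n →
      (α = eps i - eps j ∨ α = eps j - eps i ∨ α = eps i + eps j ∨ α = -(eps i + eps j)) →
      ∃ z : ℂ, α ∈ PhiZ t n lam z := by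
    intro i j hi1 hij hjn hf
    have hin : i ≤ n := le_trans (le_of_lt hij) hjn
    have hj1 : 1 ≤ j := le_trans hi1 (le_of_lt hij)
    have hiI : i ∈ Finset.Icc 1 n := Finset.mem_Icc.mpr ⟨hi1, hin⟩
    have hjI : j ∈ Finset.Icc 1 n := Finset.mem_Icc.mpr ⟨hj1, hjn⟩
    have hne : i ≠ j := Nat.ne_of_lt hij
    refine ⟨lam i, ?_⟩
    set z := lam i with hz
    have hi : i ∈ Kz n lam z := Kz_self lam hi1 hin
    rcases hf with rfl | rfl | rfl | rfl
    · rw [pairC_sub lam hiI hjI hne] at hk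
      have hj : j ∈ Kz n lam z := ⟨hj1, hjn, -k, by push_cast; linear_combination -hk⟩
      by_cases h2 : ∃ m : ℤ, 2 * z = (m : ℂ)
      · exact pmPairs_subset_PhiZ t h2 ⟨i, hi, j, hj, hij, Or.inl rfl⟩
      · simp only [PhiZ, if_neg h2]
        exact Or.inl ⟨i, hi, j, hj, hne, rfl⟩
    · rw [← neg_eps_sub, pairC_neg, pairC_sub lam hiI hjI hne] at hk
      have hj : j ∈ Kz n lam z := ⟨hj1, hjn, k, by push_cast; linear_combination hk⟩
      by_cases h2 : ∃ m : ℤ, 2 * z = (m : ℂ)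
      · exact pmPairs_subset_PhiZ t h2 ⟨i, hi, j, hj, hij, Or.inr (Or.inl (neg_eps_sub i j).symm)⟩
      · simp only [PhiZ, if_neg h2]
        exact Or.inl ⟨j, hj, i, hi, hne.symm, (neg_eps_sub i j) ▸ rfl⟩
    · rw [pairC_add lam hiI hjI hne] at hk
      have hj : j ∈ Kz n lam (-z) := ⟨hj1, hjn, k, by push_cast; linear_combination hk⟩
      by_cases h2 : ∃ m : ℤ, 2 * z = (m : ℂ)
      · obtain ⟨m, hm⟩ := h2
        have hj' : j ∈ Kz n lam z := ⟨hj1, hjn, k - m, by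
          push_cast; linear_combination hk - hm⟩
        exact pmPairs_subset_PhiZ t ⟨m, hm⟩ ⟨i, hi, j, hj', hij, Or.inr (Or.inr (Or.inl rfl))⟩
      · simp only [PhiZ, if_neg h2]
        exact Or.inr (Or.inl ⟨i, hi, j, hj, Or.inl rfl⟩)
    · rw [pairC_neg, pairC_add lam hiI hjI hne] at hk
      have hj : j ∈ Kz n lam (-z) := ⟨hj1, hjn, -k, by push_cast; linear_combination -hk⟩
      by_cases h2 : ∃ m : ℤ, 2 * z = (m : ℂ)
      · obtain ⟨m, hm⟩ := h2
        have hj' : j ∈ Kz n lam z := ⟨hj1, hjn, -k - m, by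
          push_cast; linear_combination -hk - hm⟩
        exact pmPairs_subset_PhiZ t ⟨m, hm⟩ ⟨i, hi, j, hj', hij, Or.inr (Or.inr (Or.inr rfl))⟩
      · simp only [PhiZ, if_neg h2]
        exact Or.inr (Or.inl ⟨i, hi, j, hj, Or.inr rfl⟩)
  cases t
  · rcases hα with ⟨i, j, hi1, hij, hjn, hf⟩ | ⟨i, hi1, hin, hf⟩
    · exact hpair i j hi1 hij hjn hf
    · have hiI : i ∈ Finset.Icc 1 n := Finset.mem_Icc.mpr ⟨hi1, hin⟩
      refine ⟨lam i, ?_⟩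
      have hi : i ∈ Kz n lam (lam i) := Kz_self lam hi1 hin
      rcases hf with rfl | rfl
      · rw [pairC_single lam hiI] at hk
        simp only [PhiZ, if_pos (⟨k, hk⟩ : ∃ m : ℤ, 2 * lam i = (m : ℂ))]
        exact Or.inr ⟨i, hi, Or.inl rfl⟩
      · rw [pairC_neg, pairC_single lam hiI] at hk
        have h2 : ∃ m : ℤ, 2 * lam i = (m : ℂ) := ⟨-k, by push_cast; linear_combination -hk⟩
        simp only [PhiZ, if_pos h2]
        exact Or.inr ⟨i, hi, Or.inr rfl⟩
  · rcases hα with ⟨i, j, hi1, hij, hjn, hf⟩ | ⟨i, hi1, hin, hf⟩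
    · exact hpair i j hi1 hij hjn hf
    · have hiI : i ∈ Finset.Icc 1 n := Finset.mem_Icc.mpr ⟨hi1, hin⟩
      refine ⟨lam i, ?_⟩
      have hi : i ∈ Kz n lam (lam i) := Kz_self lam hi1 hin
      rcases hf with rfl | rfl
      · rw [pairC_double lam hiI] at hk
        have hd : ∃ m : ℤ, lam i = (m : ℂ) := ⟨k, hk⟩
        have h2 : ∃ m : ℤ, 2 * lam i = (m : ℂ) := ⟨2 * k, by push_cast; linear_combination 2 * hk⟩
        simp only [PhiZ, if_pos h2, if_pos hd]
        exact Or.inr ⟨i, hi, Or.inl rfl⟩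
      · rw [pairC_neg, pairC_double lam hiI] at hk
        have hd : ∃ m : ℤ, lam i = (m : ℂ) := ⟨-k, by push_cast; linear_combination -hk⟩
        have h2 : ∃ m : ℤ, 2 * lam i = (m : ℂ) :=
          ⟨-(2 * k), by push_cast; linear_combination -(2 * hk)⟩
        simp only [PhiZ, if_pos h2, if_pos hd]
        exact Or.inr ⟨i, hi, Or.inr rfl⟩
  · rcases hα with ⟨i, j, hi1, hij, hjn, hf⟩ | h
    · exact hpair i j hi1 hij hjn hf
    · exact absurd h (Set.notMem_empty α)

lemma integral_eq_iUnion (t : BCDType) (n : ℕ) (lam : ℕ → ℂ) :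
    {α ∈ rootSys t n | ∃ k : ℤ, pairC n lam α = (k : ℂ)} = ⋃ z : ℂ, PhiZ t n lam z := by
  apply Set.Subset.antisymm
  · rintro α ⟨hα, hk⟩
    obtain ⟨z, hz⟩ := integral_mem_PhiZ t hα hk
    exact Set.mem_iUnion.mpr ⟨z, hz⟩
  · intro α hα
    obtain ⟨z, hz⟩ := Set.mem_iUnion.mp hα
    exact PhiZ_subset_integral t z hz

/-- The set of representatives. -/
def repSet : Set ℂ :=
  {z | (0 ≤ z.re ∧ z.re ≤ 1 / 2) ∧ ((z.re = 0 ∨ z.re = 1 / 2) → 0 ≤ z.im)}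

lemma repSet_sep {z z' : ℂ} (hz : z ∈ repSet) (hz' : z' ∈ repSet) (hne : z ≠ z') :
    ¬(∃ k : ℤ, z + z' = (k : ℂ)) ∧ ¬(∃ k : ℤ, z - z' = (k : ℂ)) := by
  obtain ⟨⟨h0, h1⟩, him⟩ := hz
  obtain ⟨⟨h0', h1'⟩, him'⟩ := hz'
  constructor
  · rintro ⟨k, hk⟩
    have hre : z.re + z'.re = (k : ℝ) := by
      have := congrArg Complex.re hk; simpa using this
    have him0 : z.im + z'.im = 0 := by
      have := congrArg Complex.im hk; simpa using this
    have hk01 : k = 0 ∨ k = 1 := by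
      have hlow : (0 : ℝ) ≤ (k : ℝ) := by rw [← hre]; linarith
      have hhigh : (k : ℝ) ≤ 1 := by rw [← hre]; linarith
      have hl2 : (0:ℤ) ≤ k := by exact_mod_cast hlow
      have hh2 : k ≤ 1 := by exact_mod_cast hhigh
      omega
    rcases hk01 with rfl | rfl
    · have hz0 : z.re = 0 := by simp at hre; linarith
      have hz0' : z'.re = 0 := by simp at hre; linarith
      have i1 : 0 ≤ z.im := him (Or.inl hz0)
      have i2 : 0 ≤ z'.im := him' (Or.inl hz0')
      apply hne
      apply Complex.ext <;> [skip; skip] <;> [rw [hz0, hz0']; linarith]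
    · have hz0 : z.re = 1 / 2 := by simp at hre; linarith
      have hz0' : z'.re = 1 / 2 := by simp at hre; linarith
      have i1 : 0 ≤ z.im := him (Or.inr hz0)
      have i2 : 0 ≤ z'.im := him' (Or.inr hz0')
      apply hne
      apply Complex.ext <;> [skip; skip] <;> [rw [hz0, hz0']; linarith]
  · rintro ⟨k, hk⟩
    have hre : z.re - z'.re = (k : ℝ) := by
      have := congrArg Complex.re hk; simpa using this
    have him0 : z.im - z'.im = 0 := by
      have := congrArg Complex.im hk; simpa using this
    have hk0 : k = 0 := by
      have hlow : (-1 : ℝ) < (k : ℝ) := by rw [← hre]; linarith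
      have hhigh : (k : ℝ) < 1 := by rw [← hre]; linarith
      have h1 : (-1 : ℤ) < k := by exact_mod_cast hlow
      have h2 : k < 1 := by exact_mod_cast hhigh
      omega
    apply hne
    rw [hk0] at hk
    push_cast at hk
    exact sub_eq_zero.mp hk

lemma repSet_cover (w : ℂ) :
    ∃ z ∈ repSet, (∃ k : ℤ, z + w = (k : ℂ)) ∨ (∃ k : ℤ, z - w = (k : ℂ)) := by
  set f : ℝ := Int.fract w.re with hf
  have hf0 : 0 ≤ f := Int.fract_nonneg w.re
  have hf1 : f < 1 := Int.fract_lt_one w.re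
  have hfract : w.re - (⌊w.re⌋ : ℝ) = f := rfl
  have hreA : (w - ((⌊w.re⌋ : ℤ) : ℂ)).re = f := by
    simp only [Complex.sub_re, Complex.intCast_re]; linarith
  have himA : (w - ((⌊w.re⌋ : ℤ) : ℂ)).im = w.im := by simp
  have hreC : (((⌊w.re⌋ : ℤ) : ℂ) - w).re = -f := by
    simp only [Complex.sub_re, Complex.intCast_re]; linarith
  have himC : (((⌊w.re⌋ : ℤ) : ℂ) - w).im = -w.im := by simp
  have hreB : (((⌊w.re⌋ + 1 : ℤ) : ℂ) - w).re = 1 - f := by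
    push_cast
    simp only [Complex.sub_re, Complex.add_re, Complex.intCast_re, Complex.one_re]; linarith
  have himB : (((⌊w.re⌋ + 1 : ℤ) : ℂ) - w).im = -w.im := by
    push_cast
    simp [Complex.sub_im]
  rcases lt_trichotomy f (1 / 2) with hlt | heq | hgt
  · rcases eq_or_lt_of_le hf0 with hf00 | hfpos
    · by_cases hi : 0 ≤ w.im
      · refine ⟨w - ((⌊w.re⌋ : ℤ) : ℂ), ⟨⟨?_, ?_⟩, fun _ => ?_⟩,
          Or.inr ⟨-⌊w.re⌋, by push_cast; ring⟩⟩
        · rw [hreA]; linarith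
        · rw [hreA]; linarith
        · rw [himA]; exact hi
      · refine ⟨((⌊w.re⌋ : ℤ) : ℂ) - w, ⟨⟨?_, ?_⟩, fun _ => ?_⟩,
          Or.inl ⟨⌊w.re⌋, by push_cast; ring⟩⟩
        · rw [hreC]; linarith
        · rw [hreC]; linarith
        · rw [himC]; linarith
    · refine ⟨w - ((⌊w.re⌋ : ℤ) : ℂ), ⟨⟨?_, ?_⟩, fun h => ?_⟩,
        Or.inr ⟨-⌊w.re⌋, by push_cast; ring⟩⟩
      · rw [hreA]; linarith
      · rw [hreA]; linarith
      · exfalso; rw [hreA] at h; rcases h with h | h <;> linarith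
  · by_cases hi : 0 ≤ w.im
    · refine ⟨w - ((⌊w.re⌋ : ℤ) : ℂ), ⟨⟨?_, ?_⟩, fun _ => ?_⟩,
        Or.inr ⟨-⌊w.re⌋, by push_cast; ring⟩⟩
      · rw [hreA]; linarith
      · rw [hreA]; linarith
      · rw [himA]; exact hi
    · refine ⟨((⌊w.re⌋ + 1 : ℤ) : ℂ) - w, ⟨⟨?_, ?_⟩, fun _ => ?_⟩,
        Or.inl ⟨⌊w.re⌋ + 1, by push_cast; ring⟩⟩
      · rw [hreB]; linarith
      · rw [hreB]; linarith
      · rw [himB]; linarith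
  · refine ⟨((⌊w.re⌋ + 1 : ℤ) : ℂ) - w, ⟨⟨?_, ?_⟩, fun h => ?_⟩,
      Or.inl ⟨⌊w.re⌋ + 1, by push_cast; ring⟩⟩
    · rw [hreB]; linarith
    · rw [hreB]; linarith
    · exfalso; rw [hreB] at h; rcases h with h | h <;> linarith


/-- for `Φ = B_n`, `C_n` or `D_n` and `λ ∈ ℂⁿ`, the integral
subsystem `Φ_{[λ]}` is the union of the `Φ_{(z)}`; `Φ_{(z)} = Φ_{(z')}` whenever
`z ± z' ∈ ℤ`, and `Φ_{(z)} ⊥ Φ_{(z')}` otherwise; consequently `Φ_{[λ]}` is the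
disjoint union of the pairwise orthogonal `Φ_{(z)}` over representatives `z`
with `0 ≤ Re(z) ≤ 1/2`. -/
theorem integral_root_system_decomposition (t : BCDType) (n : ℕ) (lam : ℕ → ℂ) :
    ({α ∈ rootSys t n | ∃ k : ℤ, pairC n lam α = (k : ℂ)} = ⋃ z : ℂ, PhiZ t n lam z) ∧
    (∀ z z' : ℂ, ((∃ k : ℤ, z + z' = (k : ℂ)) ∨ (∃ k : ℤ, z - z' = (k : ℂ))) →
      PhiZ t n lam z = PhiZ t n lam z') ∧
    (∀ z z' : ℂ, ¬(∃ k : ℤ, z + z' = (k : ℂ)) → ¬(∃ k : ℤ, z - z' = (k : ℂ)) →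
      ∀ α ∈ PhiZ t n lam z, ∀ β ∈ PhiZ t n lam z',
        (∑ m ∈ Finset.Icc 1 n, α m * β m) = 0) ∧
    (∃ Z : Set ℂ, (∀ z ∈ Z, 0 ≤ z.re ∧ z.re ≤ 1 / 2) ∧
      {α ∈ rootSys t n | ∃ k : ℤ, pairC n lam α = (k : ℂ)} = ⋃ z ∈ Z, PhiZ t n lam z ∧
      ∀ z ∈ Z, ∀ z' ∈ Z, z ≠ z' →
        Disjoint (PhiZ t n lam z) (PhiZ t n lam z') ∧
          ∀ α ∈ PhiZ t n lam z, ∀ β ∈ PhiZ t n lam z',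
            (∑ m ∈ Finset.Icc 1 n, α m * β m) = 0) := by
  refine ⟨integral_eq_iUnion t n lam, fun z z' h => PhiZ_congr t z z' h,
    fun z z' hp hm α hα β hβ => PhiZ_orth t hp hm hα hβ, repSet, fun z hz => hz.1, ?_, ?_⟩
  · rw [integral_eq_iUnion t n lam]
    ext α
    simp only [Set.mem_iUnion]
    constructor
    · rintro ⟨z, hz⟩
      obtain ⟨z', hz', hcase⟩ := repSet_cover z
      exact ⟨z', hz', by rwa [PhiZ_congr t z' z hcase]⟩
    · rintro ⟨z, _, hz⟩
      exact ⟨z, hz⟩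
  · intro z hz z' hz' hne
    obtain ⟨hp, hm⟩ := repSet_sep hz hz' hne
    have horth : ∀ α ∈ PhiZ t n lam z, ∀ β ∈ PhiZ t n lam z',
        (∑ m ∈ Finset.Icc 1 n, α m * β m) = 0 :=
      fun α hα β hβ => PhiZ_orth t hp hm hα hβ
    refine ⟨?_, horth⟩
    rw [Set.disjoint_left]
    intro α hα hα'
    have h0 := horth α hα α hα'
    obtain ⟨i, hiI, hi0⟩ := PhiZ_nonzero hα
    have hz0 := (Finset.sum_eq_zero_iff_of_nonneg
      (fun m _ => mul_self_nonneg (α m))).mp h0 i hiI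
    exact hi0 (mul_self_eq_zero.mp hz0)
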